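/- Let I be a finite set of items, f : I → ℝ an injective score function, H : I → {0,1} a flag function, C ⊆ I a set of candidate items, and S ⊆ I \ C a set of safe items with H(i) = 0 for every i ∈ S. Let k ≥ 1 be an integer with |S| ≥ k. For λ ∈ ℝ set C_λ = { i ∈ C : f(i) ≥ λ }, and define the replacement recommendation set S^rep_λ(k) to consist of the min(k, |C_λ|) elements of C_λ with the highest f-scores together with k − min(k, |C_λ|) arbitrary elements of S, so that |S^rep_λ(k)| = k. Define the risk R_H(S^rep_λ(k)) = |{ i ∈ S^rep_λ(k) : H(i) = 1 }| / k. Then R_H(S^rep_λ(k)) is non-increasing in λ: for all λ ≤ λ', R_H(S^rep_{λ'}(k)) ≤ R_H(S^rep_λ(k)) (regardless of which safe items are chosen to fill the remaining slots, since all safe items are unflagged). -/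
import Mathlib


/-- `IsRepSet f H C S k l P` says that `P` is a valid replacement recommendation set of
size `k` at threshold `l`: it is the union of the `min k |C_l|` highest-scored elements
of the filtered candidate pool `C_l = {i ∈ C : f i ≥ l}` with `k - min k |C_l|`
(arbitrary) safe items from `S`. -/
def IsRepSet {I : Type*} (f : I → ℝ) (C S : Set I) (k : ℕ) (l : ℝ) (P : Set I) : Prop :=
  ∃ Top Fill : Set I,
    Top ⊆ {i ∈ C | f i ≥ l} ∧
    Top.ncard = min k {i ∈ C | f i ≥ l}.ncard ∧
    (∀ t ∈ Top, ∀ c ∈ {i ∈ C | f i ≥ l} \ Top, f c ≤ f t) ∧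
    Fill ⊆ S ∧
    Fill.ncard = k - min k {i ∈ C | f i ≥ l}.ncard ∧
    P = Top ∪ Fill

/-- Proposition 2: under the replacement strategy with safe (unflagged) filler items,
the risk `R_H(S^rep_λ(k)) = |{i ∈ S^rep_λ(k) : H i = 1}| / k` of the size-`k`
replacement recommendation set is non-increasing in the threshold `λ`. -/
theorem replacement_risk_antitone
    {I : Type*} [Fintype I]
    (f : I → ℝ) (hf : Function.Injective f)
    (H : I → Fin 2)
    (C S : Set I) (hSC : S ⊆ Cᶜ)
    (hSsafe : ∀ i ∈ S, H i = 0)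
    (k : ℕ) (hk : 1 ≤ k) (hSk : k ≤ S.ncard) :
    ∀ l l' : ℝ, l ≤ l' →
      ∀ P P' : Set I, IsRepSet f C S k l P → IsRepSet f C S k l' P' →
        ({i ∈ P' | H i = 1}.ncard : ℝ) / (k : ℝ)
          ≤ ({i ∈ P | H i = 1}.ncard : ℝ) / (k : ℝ) := by
  rintro l l' hll P P' ⟨T, F, hT, hTc, hTtop, hF, hFc, rfl⟩
    ⟨T', F', hT', hTc', hTtop', hF', hFc', rfl⟩
  -- Core claim: `T' ⊆ T`.
  have hsub : T' ⊆ T := by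
    intro t' ht'
    by_contra htn
    have ht'C : t' ∈ {i ∈ C | f i ≥ l} :=
      ⟨(hT' ht').1, le_trans hll (hT' ht').2⟩
    have hlt : ∀ t ∈ T, f t' < f t := by
      intro t ht
      have hle := hTtop t ht t' ⟨ht'C, htn⟩
      rcases lt_or_eq_of_le hle with h | h
      · exact h
      · exact absurd (hf h) (by rintro rfl; exact htn ht)
    have hTsub' : T ⊆ {i ∈ C | f i ≥ l'} := fun t ht =>
      ⟨(hT ht).1, le_trans (hT' ht').2 (hlt t ht).le⟩
    have hins : insert t' T ⊆ {i ∈ C | f i ≥ l'} :=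
      Set.insert_subset ⟨(hT' ht').1, (hT' ht').2⟩ hTsub'
    have hcard : T.ncard + 1 ≤ {i ∈ C | f i ≥ l'}.ncard := by
      have h1 := Set.ncard_le_ncard hins (Set.toFinite _)
      rwa [Set.ncard_insert_of_notMem htn (Set.toFinite T)] at h1
    have hsubl : {i ∈ C | f i ≥ l'} ⊆ {i ∈ C | f i ≥ l} := fun i hi =>
      ⟨hi.1, le_trans hll hi.2⟩
    have hcardl : {i ∈ C | f i ≥ l'}.ncard ≤ {i ∈ C | f i ≥ l}.ncard :=
      Set.ncard_le_ncard hsubl (Set.toFinite _)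
    have hmin : min k {i ∈ C | f i ≥ l}.ncard = k := by
      rcases min_cases k ({i ∈ C | f i ≥ l}.ncard) with ⟨h1, _⟩ | ⟨h1, h2⟩
      · exact h1
      · exfalso
        rw [hTc, h1] at hcard
        omega
    have hT'k : T'.ncard = k := by
      rw [hTc', min_eq_left]
      rw [hTc, hmin] at hcard
      omega
    -- insert t' T has k+1 elements, can't fit in T' of size k, pick u ∈ T \ T'
    have hnotsub : ¬ insert t' T ⊆ T' := by
      intro hss
      have := Set.ncard_le_ncard hss (Set.toFinite _)
      rw [Set.ncard_insert_of_notMem htn (Set.toFinite T), hTc, hmin, hT'k] at this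
      omega
    obtain ⟨u, hu, hun⟩ := Set.not_subset.mp hnotsub
    rcases hu with rfl | huT
    · exact hun ht'
    · have hfu : f u ≤ f t' := hTtop' t' ht' u ⟨hTsub' huT, hun⟩
      exact absurd hfu (not_le.mpr (hlt u huT))
  -- Flagged items of each recommendation set come from the Top part only.
  have hflag : ∀ (T F : Set I), F ⊆ S →
      {i ∈ T ∪ F | H i = 1} = {i ∈ T | H i = 1} := by
    intro T F hFS
    ext i
    simp only [Set.mem_setOf_eq, Set.mem_union]
    constructor
    · rintro ⟨hi | hi, h1⟩
      · exact ⟨hi, h1⟩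
      · exact absurd (hSsafe i (hFS hi)) (by rw [h1]; decide)
    · rintro ⟨hi, h1⟩; exact ⟨Or.inl hi, h1⟩
  rw [hflag T F hF, hflag T' F' hF']
  have hle : {i ∈ T' | H i = 1}.ncard ≤ {i ∈ T | H i = 1}.ncard :=
    Set.ncard_le_ncard (fun i hi => ⟨hsub hi.1, hi.2⟩) (Set.toFinite _)
  have hk0 : (0:ℝ) < (k:ℝ) := by exact_mod_cast hk
  gcongr
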